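/- Let L > 0 and suppose that almost surely |τ̂| ≤ L and |τ̂_k(X)| ≤ L for every k ∈ {1,…,K}. Let (X_i, Y_i, Z_i), i = 1,…,m, be i.i.d. copies of (X, Y, Z) with pseudo-outcomes τ̂_i. Then for every δ ∈ (0,1), with probability at least 1 − δ, the empirical stacking loss is uniformly close to the population stacking loss over the simplex: sup_{w ∈ Δ_K} |ℓ̂(w) − ℓ(w)| ≤ 4√2 · L² · √(log(2(K+1)²/δ)/m). -/

import Mathlib

/-!
On the simplex, `(y - ∑ₖ wₖ fₖ)² = ∑ⱼ ∑ₖ wⱼ wₖ (y - fⱼ) (y - fₖ)`, so the empirical and the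
population losses at `w` are the same convex combination, with weights `wⱼ wₖ`, of the
empirical and population means of the `K²` products `(y - fⱼ) (y - fₖ)`, each bounded by `4 L²`.
Hence the deviation at any `w` is at most the largest of the `K²` pairwise deviations, uniformly
in `w`. Hoeffding's inequality makes each pairwise deviation exceed the radius with probability at
most `δ / (K + 1)²`, and a union bound over the pairs finishes.
-/

open MeasureTheory ProbabilityTheory Real
open scoped NNReal ENNReal

namespace ProbabilityTheory

variable {Ω : Type*} {mΩ : MeasurableSpace Ω} {μ : Measure Ω} [IsProbabilityMeasure μ]

lemma HasSubgaussianMGF.measureReal_abs_ge_le {X : Ω → ℝ} {c : ℝ≥0}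
    (h : HasSubgaussianMGF X c μ) {ε : ℝ} (hε : 0 ≤ ε) :
    μ.real {ω | ε ≤ |X ω|} ≤ 2 * exp (-ε ^ 2 / (2 * c)) := by
  have hsub : {ω | ε ≤ |X ω|} ⊆ {ω | ε ≤ X ω} ∪ {ω | ε ≤ (-X) ω} := by
    intro ω (hω : ε ≤ |X ω|)
    rcases le_abs'.1 hω with h | h
    · exact Or.inr (show ε ≤ -X ω by linarith)
    · exact Or.inl h
  calc μ.real {ω | ε ≤ |X ω|}
      ≤ μ.real {ω | ε ≤ X ω} + μ.real {ω | ε ≤ (-X) ω} :=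
        (measureReal_mono hsub).trans (measureReal_union_le _ _)
    _ ≤ exp (-ε ^ 2 / (2 * c)) + exp (-ε ^ 2 / (2 * c)) :=
        add_le_add (h.measure_ge_le hε) (h.neg.measure_ge_le hε)
    _ = 2 * exp (-ε ^ 2 / (2 * c)) := by ring

lemma hasSubgaussianMGF_sub_integral_of_abs_le {X : Ω → ℝ} (hX : AEMeasurable X μ) {c : ℝ≥0}
    (hb : ∀ᵐ ω ∂μ, |X ω| ≤ c) : HasSubgaussianMGF (fun ω ↦ X ω - μ[X]) (c ^ 2) μ := by
  convert hasSubgaussianMGF_of_mem_Icc hX (a := -c) (b := c)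
    (by filter_upwards [hb] with ω h using abs_le.1 h) using 1
  ext
  simp only [NNReal.coe_pow, NNReal.coe_div, coe_nnnorm, Real.norm_eq_abs, sub_neg_eq_add]
  rw [abs_of_nonneg (by positivity)]
  norm_num

lemma measureReal_abs_average_sub_ge_le {ι : Type*} [Fintype ι] {X : ι → Ω → ℝ}
    (h_indep : iIndepFun X μ) (hX : ∀ i, AEMeasurable (X i) μ) {c : ℝ≥0}
    (hb : ∀ i, ∀ᵐ ω ∂μ, |X i ω| ≤ c) {D : ℝ} (hD : ∀ i, μ[X i] = D) {t : ℝ} (ht : 0 ≤ t) :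
    μ.real {ω | t ≤ |(1 / (Fintype.card ι : ℝ)) * ∑ i, X i ω - D|}
      ≤ 2 * exp (-(Fintype.card ι * t ^ 2) / (2 * c ^ 2)) := by
  rcases Nat.eq_zero_or_pos (Fintype.card ι) with hn | hn
  · refine measureReal_le_one.trans ?_
    simp [hn]
  have hsum : HasSubgaussianMGF (fun ω ↦ ∑ i ∈ Finset.univ, (X i ω - D)) (∑ _i : ι, c ^ 2) μ :=
    HasSubgaussianMGF.sum_of_iIndepFun (h_indep.comp _ fun _ ↦ measurable_sub_const D)
      fun i _ ↦ hD i ▸ hasSubgaussianMGF_sub_integral_of_abs_le (hX i) (hb i)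
  have hn' : (0 : ℝ) < Fintype.card ι := by exact_mod_cast hn
  have hset : {ω | t ≤ |(1 / (Fintype.card ι : ℝ)) * ∑ i, X i ω - D|}
      = {ω | Fintype.card ι * t ≤ |∑ i, (X i ω - D)|} := by
    ext ω
    have : (1 / (Fintype.card ι : ℝ)) * ∑ i, X i ω - D
        = (∑ i, (X i ω - D)) / Fintype.card ι := by
      rw [Finset.sum_sub_distrib]
      simp only [one_div, Finset.sum_const, Finset.card_univ, nsmul_eq_mul]
      field_simp
    simp only [Set.mem_ofPred_eq, this, abs_div, abs_of_pos hn', le_div_iff₀ hn', mul_comm]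
  rw [hset]
  refine (hsum.measureReal_abs_ge_le (by positivity)).trans_eq ?_
  simp only [Finset.sum_const, Finset.card_univ, nsmul_eq_mul]
  push_cast
  field_simp

lemma one_sub_card_mul_le_measure_iInter_compl {κ : Type*} [Fintype κ] (B : κ → Set Ω)
    {ε : ℝ≥0∞} (h : ∀ k, μ (B k) ≤ ε) : 1 - Fintype.card κ * ε ≤ μ (⋂ k, (B k)ᶜ) := by
  have hbad : μ (⋂ k, (B k)ᶜ)ᶜ ≤ Fintype.card κ * ε := by
    simp only [Set.compl_iInter, compl_compl]
    calc μ (⋃ k, B k) ≤ ∑ k, μ (B k) := measure_iUnion_fintype_le μ B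
      _ ≤ ∑ _k : κ, ε := Finset.sum_le_sum fun k _ ↦ h k
      _ = Fintype.card κ * ε := by simp
  rw [tsub_le_iff_right]
  calc 1 = μ Set.univ := measure_univ.symm
    _ ≤ μ (⋂ k, (B k)ᶜ) + μ (⋂ k, (B k)ᶜ)ᶜ := measure_univ_le_add_compl _
    _ ≤ μ (⋂ k, (B k)ᶜ) + Fintype.card κ * ε := by gcongr

end ProbabilityTheory

section Simplex

variable {ι : Type*} [Fintype ι] {w : ι → ℝ}

lemma sq_sub_sum_mul_eq_sum_sum (hw : ∑ k, w k = 1) (u : ℝ) (v : ι → ℝ) :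
    (u - ∑ k, w k * v k) ^ 2 = ∑ j, ∑ k, w j * w k * ((u - v j) * (u - v k)) := by
  have h : u - ∑ k, w k * v k = ∑ j, w j * (u - v j) := by
    simp only [mul_sub, Finset.sum_sub_distrib, ← Finset.sum_mul, hw, one_mul]
  rw [h, sq, Finset.sum_mul_sum]
  exact Finset.sum_congr rfl fun j _ ↦ Finset.sum_congr rfl fun k _ ↦ by ring

lemma abs_sum_sum_mul_le (hw0 : ∀ k, 0 ≤ w k) (hw1 : ∑ k, w k = 1) {a : ι → ι → ℝ} {t : ℝ}
    (h : ∀ j k, |a j k| ≤ t) : |∑ j, ∑ k, w j * w k * a j k| ≤ t := by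
  calc |∑ j, ∑ k, w j * w k * a j k| ≤ ∑ j, ∑ k, |w j * w k * a j k| :=
        (Finset.abs_sum_le_sum_abs _ _).trans
          (Finset.sum_le_sum fun j _ ↦ Finset.abs_sum_le_sum_abs _ _)
    _ ≤ ∑ j, ∑ k, w j * w k * t := by
        gcongr with j _ k _
        rw [abs_mul, abs_of_nonneg (mul_nonneg (hw0 j) (hw0 k))]
        exact mul_le_mul_of_nonneg_left (h j k) (mul_nonneg (hw0 j) (hw0 k))
    _ = t := by simp only [← Finset.sum_mul, ← Finset.mul_sum, hw1, mul_one, one_mul]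

end Simplex

/-- The radius `4 √2 L² √(log R / m)` is chosen so that Hoeffding's exponent for variables
bounded by `4 L²` is exactly `log R`. -/
lemma exp_neg_hoeffding_exponent_eq_inv {L R : ℝ} {m : ℕ} (hL : L ≠ 0) (hm : 0 < m) (hR : 1 ≤ R) :
    exp (-(m * (4 * √2 * L ^ 2 * √(log R / m)) ^ 2) / (2 * (4 * L ^ 2) ^ 2)) = R⁻¹ := by
  have hm' : (0 : ℝ) < m := by exact_mod_cast hm
  have harg : -(m * (4 * √2 * L ^ 2 * √(log R / m)) ^ 2) / (2 * (4 * L ^ 2) ^ 2) = -log R := by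
    rw [mul_pow, mul_pow, mul_pow, sq_sqrt (div_nonneg (log_nonneg hR) hm'.le),
      sq_sqrt zero_le_two]
    field_simp
  rw [harg, exp_neg, exp_log (by linarith)]

section SquareLoss

variable {S ι : Type*}

def residualProduct (y : S → ℝ) (f : ι → S → ℝ) (j k : ι) (s : S) : ℝ :=
  (y s - f j s) * (y s - f k s)

lemma abs_residualProduct_le {y : S → ℝ} {f : ι → S → ℝ} {s : S} {L : ℝ} (hy : |y s| ≤ L)
    (hf : ∀ k, |f k s| ≤ L) (j k : ι) : |residualProduct y f j k s| ≤ 4 * L ^ 2 := by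
  have hj := (abs_sub _ _).trans (add_le_add hy (hf j))
  have hk := (abs_sub _ _).trans (add_le_add hy (hf k))
  calc |residualProduct y f j k s| = |y s - f j s| * |y s - f k s| := abs_mul _ _
    _ ≤ (L + L) * (L + L) := mul_le_mul hj hk (abs_nonneg _) ((abs_nonneg _).trans hj)
    _ = 4 * L ^ 2 := by ring

lemma sq_loss_eq_sum_sum_residualProduct [Fintype ι] {y : S → ℝ} {f : ι → S → ℝ} {w : ι → ℝ}
    (hw : ∑ k, w k = 1) (s : S) :
    (y s - ∑ k, w k * f k s) ^ 2 = ∑ j, ∑ k, w j * w k * residualProduct y f j k s :=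
  sq_sub_sum_mul_eq_sum_sum hw _ _

lemma empirical_sq_loss_eq_sum_sum [Fintype ι] {y : S → ℝ} {f : ι → S → ℝ} {w : ι → ℝ}
    (hw : ∑ k, w k = 1) {m : ℕ} (s : Fin m → S) :
    (1 / (m : ℝ)) * ∑ i, (y (s i) - ∑ k, w k * f k (s i)) ^ 2
      = ∑ j, ∑ k, w j * w k * ((1 / (m : ℝ)) * ∑ i, residualProduct y f j k (s i)) := by
  simp only [sq_loss_eq_sum_sum_residualProduct hw, Finset.mul_sum]
  rw [Finset.sum_comm]
  refine Finset.sum_congr rfl fun j _ ↦ ?_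
  rw [Finset.sum_comm]
  exact Finset.sum_congr rfl fun k _ ↦ Finset.sum_congr rfl fun i _ ↦ by ring

lemma integral_sq_loss_eq_sum_sum [Fintype ι] {Ω : Type*} [MeasurableSpace Ω] {P : Measure Ω}
    {ξ : Ω → S} {y : S → ℝ} {f : ι → S → ℝ}
    (hint : ∀ j k, Integrable (fun ω ↦ residualProduct y f j k (ξ ω)) P) {w : ι → ℝ}
    (hw : ∑ k, w k = 1) :
    ∫ ω, (y (ξ ω) - ∑ k, w k * f k (ξ ω)) ^ 2 ∂P
      = ∑ j, ∑ k, w j * w k * ∫ ω, residualProduct y f j k (ξ ω) ∂P := by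
  simp only [sq_loss_eq_sum_sum_residualProduct hw]
  rw [integral_finsetSum _ fun j _ ↦ integrable_finsetSum _ fun k _ ↦ (hint j k).const_mul _]
  refine Finset.sum_congr rfl fun j _ ↦ ?_
  rw [integral_finsetSum _ fun k _ ↦ (hint j k).const_mul _]
  exact Finset.sum_congr rfl fun k _ ↦ integral_const_mul _ _

lemma abs_empirical_sq_loss_sub_integral_le [Fintype ι] {Ω : Type*} [MeasurableSpace Ω]
    {P : Measure Ω} {ξ : Ω → S} {y : S → ℝ} {f : ι → S → ℝ}
    (hint : ∀ j k, Integrable (fun ω ↦ residualProduct y f j k (ξ ω)) P)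
    {m : ℕ} (s : Fin m → S) {t : ℝ}
    (h : ∀ j k, |(1 / (m : ℝ)) * ∑ i, residualProduct y f j k (s i)
      - ∫ ω, residualProduct y f j k (ξ ω) ∂P| ≤ t)
    {w : ι → ℝ} (hw0 : ∀ k, 0 ≤ w k) (hw1 : ∑ k, w k = 1) :
    |(1 / (m : ℝ)) * ∑ i, (y (s i) - ∑ k, w k * f k (s i)) ^ 2
      - ∫ ω, (y (ξ ω) - ∑ k, w k * f k (ξ ω)) ^ 2 ∂P| ≤ t := by
  rw [empirical_sq_loss_eq_sum_sum hw1, integral_sq_loss_eq_sum_sum hint hw1,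
    ← Finset.sum_sub_distrib]
  simp only [← Finset.sum_sub_distrib, ← mul_sub]
  exact abs_sum_sum_mul_le hw0 hw1 h

end SquareLoss

theorem sq_loss_uniform_concentration_of_iid {Ω S ι : Type*} [MeasurableSpace Ω]
    [MeasurableSpace S] [Fintype ι] (P : Measure Ω) [IsProbabilityMeasure P]
    (ξ : Ω → S) (hξ : AEMeasurable ξ P) {m : ℕ} (hm : 0 < m) (ξs : Fin m → Ω → S)
    (hiid : iIndepFun ξs P) (hident : ∀ i, IdentDistrib (ξs i) ξ P P)
    (y : S → ℝ) (hy : Measurable y) (f : ι → S → ℝ) (hf : ∀ k, Measurable (f k))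
    {L : ℝ} (hL : 0 < L) (hby : ∀ᵐ ω ∂P, |y (ξ ω)| ≤ L) (hbf : ∀ k, ∀ᵐ ω ∂P, |f k (ξ ω)| ≤ L)
    {δ : ℝ} (hδ0 : 0 < δ) (hδ1 : δ ≤ 1) :
    1 - ENNReal.ofReal δ ≤ P {ω | ∀ w : ι → ℝ, (∀ k, 0 ≤ w k) → ∑ k, w k = 1 →
      |(1 / (m : ℝ)) * ∑ i, (y (ξs i ω) - ∑ k, w k * f k (ξs i ω)) ^ 2
          - ∫ ω', (y (ξ ω') - ∑ k, w k * f k (ξ ω')) ^ 2 ∂P|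
        ≤ 4 * √2 * L ^ 2 * √(log (2 * (Fintype.card ι + 1) ^ 2 / δ) / m)} := by
  set n : ℝ := (Fintype.card ι : ℝ)
  set R := 2 * (n + 1) ^ 2 / δ
  set t := 4 * √2 * L ^ 2 * √(log R / m)
  have hn : 0 ≤ n := Nat.cast_nonneg _
  have hR : 1 ≤ R := by
    rw [le_div_iff₀ hδ0]
    nlinarith
  let g := residualProduct y f
  have hg : ∀ j k, Measurable (g j k) := fun j k ↦ (hy.sub (hf j)).mul (hy.sub (hf k))
  have hbg : ∀ j k, ∀ᵐ ω ∂P, |g j k (ξ ω)| ≤ 4 * L ^ 2 := fun j k ↦ by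
    filter_upwards [hby, ae_all_iff.2 hbf] with ω hyω hfω using abs_residualProduct_le hyω hfω j k
  let bad : ι × ι → Set Ω := fun jk ↦
    {ω | t ≤ |(1 / (m : ℝ)) * ∑ i, g jk.1 jk.2 (ξs i ω) - ∫ ω', g jk.1 jk.2 (ξ ω') ∂P|}
  have htail : ∀ jk, P (bad jk) ≤ ENNReal.ofReal (δ / (n + 1) ^ 2) := by
    rintro ⟨j, k⟩
    have hid : ∀ i, IdentDistrib (fun ω ↦ g j k (ξs i ω)) (fun ω ↦ g j k (ξ ω)) P P :=
      fun i ↦ (hident i).comp (hg j k)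
    let c : ℝ≥0 := ⟨4 * L ^ 2, by positivity⟩
    have h := measureReal_abs_average_sub_ge_le (c := c) (t := t)
      (hiid.comp _ fun _ ↦ hg j k) (fun i ↦ (hid i).aemeasurable_fst)
      (fun i ↦ (hid i).symm.ae_snd (measurableSet_le continuous_abs.measurable
        measurable_const) (hbg j k))
      (fun i ↦ (hid i).integral_eq) (by positivity)
    rw [Fintype.card_fin, show (c : ℝ) = 4 * L ^ 2 from rfl,
      exp_neg_hoeffding_exponent_eq_inv hL.ne' hm hR] at h
    rw [← ofReal_measureReal]
    refine ENNReal.ofReal_le_ofReal (h.trans_eq ?_)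
    simp only [R]
    field_simp
  have hunion : Fintype.card (ι × ι) * ENNReal.ofReal (δ / (n + 1) ^ 2) ≤ ENNReal.ofReal δ := by
    rw [← ENNReal.ofReal_natCast, ← ENNReal.ofReal_mul (by positivity)]
    refine ENNReal.ofReal_le_ofReal ?_
    rw [Fintype.card_prod, Nat.cast_mul, ← mul_div_assoc, div_le_iff₀ (by positivity)]
    nlinarith
  have hgint : ∀ j k, Integrable (fun ω ↦ g j k (ξ ω)) P := fun j k ↦
    .of_bound ((hg j k).comp_aemeasurable hξ).aestronglyMeasurable _ (hbg j k)
  refine (tsub_le_tsub_left hunion 1).trans <|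
    (one_sub_card_mul_le_measure_iInter_compl bad htail).trans (measure_mono ?_)
  intro ω hω w hw0 hw1
  exact abs_empirical_sq_loss_sub_integral_le hgint (fun i ↦ ξs i ω)
    (fun j k ↦ le_of_lt <| not_le.1 <| Set.mem_iInter.1 hω (j, k)) hw0 hw1

noncomputable def pseudoOutcome {𝒳 : Type*} (μ0 μ1 : 𝒳 → ℝ) (p : ℝ) (q : 𝒳 × ℝ × ℝ) : ℝ :=
  (μ1 q.1 - μ0 q.1) + (q.2.1 - μ1 q.1) * q.2.2 / p - (q.2.1 - μ0 q.1) * (1 - q.2.2) / (1 - p)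

lemma measurable_pseudoOutcome {𝒳 : Type*} [MeasurableSpace 𝒳] {μ0 μ1 : 𝒳 → ℝ}
    (hμ0 : Measurable μ0) (hμ1 : Measurable μ1) (p : ℝ) : Measurable (pseudoOutcome μ0 μ1 p) := by
  unfold pseudoOutcome
  fun_prop

theorem empirical_stacking_loss_uniform_concentration_general
    {Ω 𝒳 : Type*} [MeasurableSpace Ω] [MeasurableSpace 𝒳]
    (P : Measure Ω) [IsProbabilityMeasure P]
    (X : Ω → 𝒳) (Y0 Y1 Z : Ω → ℝ)
    (hX : Measurable X) (hY0 : Measurable Y0) (hY1 : Measurable Y1) (hZ : Measurable Z)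
    (p : ℝ)
    (Y : Ω → ℝ) (hY : ∀ ω, Y ω = Z ω * Y1 ω + (1 - Z ω) * Y0 ω)
    (μ0 μ1 : 𝒳 → ℝ) (hμ0 : Measurable μ0) (hμ1 : Measurable μ1)
    (K : ℕ) (τk : Fin K → 𝒳 → ℝ) (hτk : ∀ k, Measurable (τk k))
    -- the pseudo-outcome built from the generic sample `(X, Y, Z)`
    (τhat : Ω → ℝ)
    (hτhat : ∀ ω, τhat ω = (μ1 (X ω) - μ0 (X ω))
        + (Y ω - μ1 (X ω)) * Z ω / p - (Y ω - μ0 (X ω)) * (1 - Z ω) / (1 - p))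
    -- boundedness: |τ̂| ≤ L and |τ̂_k(X)| ≤ L almost surely
    (L : ℝ) (hL : 0 < L)
    (hbτhat : ∀ᵐ ω ∂P, |τhat ω| ≤ L)
    (hbτk : ∀ k, ∀ᵐ ω ∂P, |τk k (X ω)| ≤ L)
    -- the i.i.d. samples
    (m : ℕ) (hm : 0 < m)
    (Xs : Fin m → Ω → 𝒳) (Ys Zs : Fin m → Ω → ℝ)
    (hXs : ∀ i, Measurable (Xs i)) (hYs : ∀ i, Measurable (Ys i))
    (hZs : ∀ i, Measurable (Zs i))
    (hiid : iIndepFun (fun i ω => (Xs i ω, Ys i ω, Zs i ω)) P)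
    (hident : ∀ i, Measure.map (fun ω => (Xs i ω, Ys i ω, Zs i ω)) P
        = Measure.map (fun ω => (X ω, Y ω, Z ω)) P)
    -- the per-sample pseudo-outcomes
    (τhats : Fin m → Ω → ℝ)
    (hτhats : ∀ i ω, τhats i ω = (μ1 (Xs i ω) - μ0 (Xs i ω))
        + (Ys i ω - μ1 (Xs i ω)) * Zs i ω / p
        - (Ys i ω - μ0 (Xs i ω)) * (1 - Zs i ω) / (1 - p))
    (δ : ℝ) (hδ : δ ∈ Set.Ioo (0 : ℝ) 1) :
    1 - ENNReal.ofReal δ ≤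
      P {ω | ∀ w : Fin K → ℝ, (∀ k, 0 ≤ w k) → (∑ k, w k = 1) →
        |(1 / (m : ℝ)) * ∑ i, (τhats i ω - ∑ k, w k * τk k (Xs i ω)) ^ 2
            - ∫ ω', (τhat ω' - ∑ k, w k * τk k (X ω')) ^ 2 ∂P|
          ≤ 4 * Real.sqrt 2 * L ^ 2
              * Real.sqrt (Real.log (2 * (K + 1) ^ 2 / δ) / m)} := by
  have hYm : Measurable Y := by
    rw [show Y = fun ω ↦ Z ω * Y1 ω + (1 - Z ω) * Y0 ω from funext hY]
    fun_prop
  have hident' : ∀ i, IdentDistrib (fun ω ↦ (Xs i ω, Ys i ω, Zs i ω))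
      (fun ω ↦ (X ω, Y ω, Z ω)) P P := fun i ↦ ⟨by fun_prop, by fun_prop, hident i⟩
  obtain rfl : τhat = fun ω ↦ pseudoOutcome μ0 μ1 p (X ω, Y ω, Z ω) := funext hτhat
  obtain rfl : τhats = fun i ω ↦ pseudoOutcome μ0 μ1 p (Xs i ω, Ys i ω, Zs i ω) :=
    funext₂ hτhats
  simpa only [Fintype.card_fin] using sq_loss_uniform_concentration_of_iid P _ (by fun_prop) hm _
    hiid hident' _ (measurable_pseudoOutcome hμ0 hμ1 p) (fun k q ↦ τk k q.1)
    (fun k ↦ (hτk k).comp measurable_fst) hL hbτhat hbτk hδ.1 hδ.2.le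

/-- Uniform concentration of the empirical stacking loss over the simplex: if the
pseudo-outcome and the candidate models are a.s. bounded by `L`, then with probability
at least `1 − δ`, `sup_{w ∈ Δ_K} |ℓ̂(w) − ℓ(w)| ≤ 4√2 · L² · √(log(2(K+1)²/δ)/m)`. -/
theorem empirical_stacking_loss_uniform_concentration
    {Ω 𝒳 : Type*} [MeasurableSpace Ω] [MeasurableSpace 𝒳]
    (P : Measure Ω) [IsProbabilityMeasure P]
    (X : Ω → 𝒳) (Y0 Y1 Z : Ω → ℝ)
    (hX : Measurable X) (hY0 : Measurable Y0) (hY1 : Measurable Y1) (hZ : Measurable Z)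
    (hZval : ∀ ω, Z ω = 0 ∨ Z ω = 1)
    (p : ℝ) (hp : p ∈ Set.Ioo (0 : ℝ) 1)
    (hZp : P {ω | Z ω = 1} = ENNReal.ofReal p)
    (hindep : IndepFun Z (fun ω => (X ω, Y0 ω, Y1 ω)) P)
    (Y : Ω → ℝ) (hY : ∀ ω, Y ω = Z ω * Y1 ω + (1 - Z ω) * Y0 ω)
    (μ0 μ1 : 𝒳 → ℝ) (hμ0 : Measurable μ0) (hμ1 : Measurable μ1)
    (K : ℕ) (τk : Fin K → 𝒳 → ℝ) (hτk : ∀ k, Measurable (τk k))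
    -- the pseudo-outcome built from the generic sample `(X, Y, Z)`
    (τhat : Ω → ℝ)
    (hτhat : ∀ ω, τhat ω = (μ1 (X ω) - μ0 (X ω))
        + (Y ω - μ1 (X ω)) * Z ω / p - (Y ω - μ0 (X ω)) * (1 - Z ω) / (1 - p))
    -- boundedness: |τ̂| ≤ L and |τ̂_k(X)| ≤ L almost surely
    (L : ℝ) (hL : 0 < L)
    (hbτhat : ∀ᵐ ω ∂P, |τhat ω| ≤ L)
    (hbτk : ∀ k, ∀ᵐ ω ∂P, |τk k (X ω)| ≤ L)
    -- the i.i.d. samples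
    (m : ℕ) (hm : 0 < m)
    (Xs : Fin m → Ω → 𝒳) (Ys Zs : Fin m → Ω → ℝ)
    (hXs : ∀ i, Measurable (Xs i)) (hYs : ∀ i, Measurable (Ys i))
    (hZs : ∀ i, Measurable (Zs i))
    (hiid : iIndepFun (fun i ω => (Xs i ω, Ys i ω, Zs i ω)) P)
    (hident : ∀ i, Measure.map (fun ω => (Xs i ω, Ys i ω, Zs i ω)) P
        = Measure.map (fun ω => (X ω, Y ω, Z ω)) P)
    -- the per-sample pseudo-outcomes
    (τhats : Fin m → Ω → ℝ)
    (hτhats : ∀ i ω, τhats i ω = (μ1 (Xs i ω) - μ0 (Xs i ω))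
        + (Ys i ω - μ1 (Xs i ω)) * Zs i ω / p
        - (Ys i ω - μ0 (Xs i ω)) * (1 - Zs i ω) / (1 - p))
    (δ : ℝ) (hδ : δ ∈ Set.Ioo (0 : ℝ) 1) :
    1 - ENNReal.ofReal δ ≤
      P {ω | ∀ w : Fin K → ℝ, (∀ k, 0 ≤ w k) → (∑ k, w k = 1) →
        |(1 / (m : ℝ)) * ∑ i, (τhats i ω - ∑ k, w k * τk k (Xs i ω)) ^ 2
            - ∫ ω', (τhat ω' - ∑ k, w k * τk k (X ω')) ^ 2 ∂P|
          ≤ 4 * Real.sqrt 2 * L ^ 2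
              * Real.sqrt (Real.log (2 * (K + 1) ^ 2 / δ) / m)} :=
  empirical_stacking_loss_uniform_concentration_general P X Y0 Y1 Z hX hY0 hY1 hZ p Y hY μ0 μ1 hμ0
    hμ1 K τk hτk τhat hτhat L hL hbτhat hbτk m hm Xs Ys Zs hXs hYs hZs hiid hident τhats hτhats δ hδ
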